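/- arXiv:1910.07555 — 5 statements merged into one kernel-verified Lean document; each statement's English description precedes it below -/
import Mathlib

section
/- Let Σ1, Σ2 be symmetric positive semidefinite d×d matrices. Then trace((Σ1^{1/2} Σ2 Σ1^{1/2})^{1/2}) ≥ trace(Σ1^{1/2} Σ2^{1/2}). (Araki–Lieb–Thirring inequality with r = 1/2, q = 1.) -/
/-!
Let `C = (Σ₁^{1/2} Σ₂ Σ₁^{1/2})^{1/2}` and `M = Σ₁^{1/2} Σ₂^{1/2}`, so that `C² = M Mᵀ`.
In an orthonormal eigenbasis of `C`, with eigenvalues `λᵢ ≥ 0`, the `i`-th row of `M` has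
squared norm `λᵢ²`, so its diagonal entry is at most `λᵢ`; summing gives `tr M ≤ tr C`.
-/

open MeasureTheory Matrix

open scoped ComplexOrder in
/-- The positive semidefinite square root of a positive semidefinite matrix
(the definition `Matrix.PosSemidef.sqrt` of the older Mathlib, removed since). -/
noncomputable def Matrix.PosSemidef.sqrt {n 𝕜 : Type*} [Fintype n] [RCLike 𝕜] [DecidableEq n]
    {A : Matrix n n 𝕜} (hA : A.PosSemidef) : Matrix n n 𝕜 :=
  hA.1.eigenvectorUnitary.1 * diagonal ((↑) ∘ (fun x : ℝ => Real.sqrt x) ∘ hA.1.eigenvalues) *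
    (star hA.1.eigenvectorUnitary : Matrix n n 𝕜)

namespace Matrix

variable {n : Type*} [Fintype n] [DecidableEq n]

namespace PosSemidef

open scoped ComplexOrder

variable {𝕜 : Type*} [RCLike 𝕜] {A : Matrix n n 𝕜}

lemma posSemidef_sqrt (hA : A.PosSemidef) : hA.sqrt.PosSemidef := by
  unfold PosSemidef.sqrt
  apply PosSemidef.mul_mul_conjTranspose_same
  refine posSemidef_diagonal_iff.mpr fun i => ?_
  simp [Real.sqrt_nonneg]

lemma sqrt_mul_self (hA : A.PosSemidef) : hA.sqrt * hA.sqrt = A := by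
  set U : Matrix n n 𝕜 := (hA.1.eigenvectorUnitary : Matrix n n 𝕜)
  set E : Matrix n n 𝕜 := diagonal ((↑) ∘ (fun x : ℝ => Real.sqrt x) ∘ hA.1.eigenvalues)
  have hUU : star U * U = 1 := Unitary.coe_star_mul_self _
  have hEE : E * E = diagonal (RCLike.ofReal ∘ hA.1.eigenvalues) := by
    rw [diagonal_mul_diagonal]
    congr! with i
    simp [← RCLike.ofReal_mul, Real.mul_self_sqrt (hA.eigenvalues_nonneg i)]
  calc hA.sqrt * hA.sqrt = U * E * (star U * U) * E * star U := by
        simp only [PosSemidef.sqrt, U, E, Matrix.mul_assoc]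
    _ = U * (E * E) * star U := by rw [hUU, Matrix.mul_one, Matrix.mul_assoc U]
    _ = A := by
        conv_rhs => rw [hA.1.spectral_theorem, Unitary.conjStarAlgAut_apply]
        rw [hEE]

end PosSemidef

lemma trace_le_sum_of_mul_conjTranspose_eq_diagonal {N : Matrix n n ℝ} {e : n → ℝ}
    (he : 0 ≤ e) (hN : N * Nᴴ = diagonal fun i => e i ^ 2) : N.trace ≤ ∑ i, e i := by
  refine Finset.sum_le_sum fun i _ => abs_le_of_sq_le_sq' ?_ (he i) |>.2
  calc N i i ^ 2 ≤ ∑ j, N i j ^ 2 :=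
        Finset.single_le_sum (fun j _ => sq_nonneg (N i j)) (Finset.mem_univ i)
    _ = e i ^ 2 := by simpa [mul_apply, sq] using congr_fun₂ hN i i

lemma trace_le_trace_of_mul_self_eq_mul_conjTranspose {M C : Matrix n n ℝ} (hC : C.PosSemidef)
    (h : C * C = M * Mᴴ) : M.trace ≤ C.trace := by
  set U : Matrix n n ℝ := (hC.1.eigenvectorUnitary : Matrix n n ℝ)
  have hUU : U * Uᴴ = 1 := Unitary.coe_mul_star_self hC.1.eigenvectorUnitary
  have hD : Uᴴ * C * U = diagonal hC.1.eigenvalues := by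
    simpa [star_eq_conjTranspose] using hC.1.conjStarAlgAut_star_eigenvectorUnitary
  have hN : (Uᴴ * M * U) * (Uᴴ * M * U)ᴴ = diagonal fun i => hC.1.eigenvalues i ^ 2 := by
    calc (Uᴴ * M * U) * (Uᴴ * M * U)ᴴ = Uᴴ * (M * Mᴴ) * U := by
          simp only [conjTranspose_mul, conjTranspose_conjTranspose, Matrix.mul_assoc]
          rw [← Matrix.mul_assoc U, hUU, Matrix.one_mul]
      _ = (Uᴴ * C * U) * (Uᴴ * C * U) := by
          rw [← h]
          simp only [Matrix.mul_assoc]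
          rw [← Matrix.mul_assoc U, hUU, Matrix.one_mul]
      _ = _ := by rw [hD, diagonal_mul_diagonal]; simp [sq]
  calc M.trace = (Uᴴ * M * U).trace := by rw [trace_mul_cycle, hUU, Matrix.one_mul]
    _ ≤ ∑ i, hC.1.eigenvalues i :=
      trace_le_sum_of_mul_conjTranspose_eq_diagonal hC.eigenvalues_nonneg hN
    _ = C.trace := by simp [hC.1.trace_eq_sum_eigenvalues]

end Matrix

theorem stmt4 {d : ℕ} (S1 S2 : Matrix (Fin d) (Fin d) ℝ)
    (h1 : S1.PosSemidef) (h2 : S2.PosSemidef)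
    (h12 : (h1.sqrt * S2 * h1.sqrt).PosSemidef) :
    (h1.sqrt * h2.sqrt).trace ≤ h12.sqrt.trace := by
  refine trace_le_trace_of_mul_self_eq_mul_conjTranspose h12.posSemidef_sqrt ?_
  rw [h12.sqrt_mul_self, conjTranspose_mul, h1.posSemidef_sqrt.1.eq, h2.posSemidef_sqrt.1.eq,
    Matrix.mul_assoc, Matrix.mul_assoc, ← Matrix.mul_assoc h2.sqrt, h2.sqrt_mul_self]
end

section
/- Let B be a symmetric positive definite d×d matrix, σ > 0, and C0 symmetric positive definite. Then C(t) = ((1 − e^{−2σt})/σ · B^{−1} + e^{−2σt} · C0^{−1})^{−1} solves the matrix ODE C'(t) = −2 C(t) B^{−1} C(t) + 2σ C(t) with C(0) = C0, and C(t) is symmetric positive definite for all t ≥ 0. -/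
/-!
The inverse `P(t) = C(t)⁻¹` is a combination of `B⁻¹` and `C0⁻¹` with nonnegative coefficients,
positive on `C0⁻¹`, so it is positive definite for `t ≥ 0`; it solves the linear equation
`P' = 2 B⁻¹ - 2 σ P`. Differentiating the inverse, `(P⁻¹)' = -P⁻¹ P' P⁻¹`, turns this linear
equation into the Riccati equation for `C = P⁻¹`.
-/

open Matrix

attribute [local instance] Matrix.linftyOpNormedRing Matrix.linftyOpNormedAlgebra

theorem HasDerivAt.ringInverse {𝕜 R : Type*} [NontriviallyNormedField 𝕜] [NormedRing R]
    [HasSummableGeomSeries R] [NormedAlgebra 𝕜 R] {f : 𝕜 → R} {f' : R} {t : 𝕜}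
    (hf : HasDerivAt f f' t) (ht : IsUnit (f t)) :
    HasDerivAt (fun s => Ring.inverse (f s))
      (-(Ring.inverse (f t) * f' * Ring.inverse (f t))) t := by
  obtain ⟨u, hu⟩ := ht
  have hinv := hasFDerivAt_ringInverse (𝕜 := 𝕜) u
  rw [hu] at hinv
  simpa [← hu, Function.comp_def] using hinv.comp_hasDerivAt t hf

section MatrixInverse

variable {𝕜 : Type*} [RCLike 𝕜] {n : Type*} [Fintype n] [DecidableEq n]
  {M : 𝕜 → Matrix n n 𝕜} {t : 𝕜}

theorem HasDerivAt.matrix_inv {M' : Matrix n n 𝕜} (hM : HasDerivAt M M' t)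
    (ht : IsUnit (M t)) :
    HasDerivAt (fun s => (M s)⁻¹) (-((M t)⁻¹ * M' * (M t)⁻¹)) t := by
  simp only [nonsing_inv_eq_ringInverse]
  exact hM.ringInverse ht

theorem HasDerivAt.matrix_inv_of_sub_smul {A : Matrix n n 𝕜} {c : 𝕜}
    (hM : HasDerivAt M (A - c • M t) t) (ht : IsUnit (M t)) :
    HasDerivAt (fun s => (M s)⁻¹) (-((M t)⁻¹ * A * (M t)⁻¹) + c • (M t)⁻¹) t := by
  convert hM.matrix_inv ht using 1
  have hdet : IsUnit (M t).det := (isUnit_iff_isUnit_det _).1 ht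
  rw [Matrix.mul_sub, Matrix.sub_mul, Matrix.mul_smul, Matrix.smul_mul, nonsing_inv_mul _ hdet,
    Matrix.one_mul]
  abel

end MatrixInverse

theorem one_sub_exp_div_nonneg {σ t : ℝ} (ht : 0 ≤ t) :
    0 ≤ (1 - Real.exp (-2 * σ * t)) / σ := by
  rcases le_total σ 0 with hσ | hσ
  · exact div_nonneg_of_nonpos (sub_nonpos.2 (Real.one_le_exp (by nlinarith))) hσ
  · exact div_nonneg (sub_nonneg.2 (Real.exp_le_one_iff.2 (by nlinarith))) hσ

section RiccatiPrecision

variable {n : Type*} [Fintype n] [DecidableEq n] (B C₀ : Matrix n n ℝ) (σ : ℝ)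

noncomputable def riccatiRiccatiPrecision (t : ℝ) : Matrix n n ℝ :=
  ((1 - Real.exp (-2 * σ * t)) / σ) • B⁻¹ + Real.exp (-2 * σ * t) • C₀⁻¹

@[simp]
theorem riccatiRiccatiPrecision_zero : riccatiRiccatiPrecision B C₀ σ 0 = C₀⁻¹ := by
  simp [riccatiRiccatiPrecision]

variable {B C₀}

theorem posDef_riccatiRiccatiPrecision (hB : B.PosDef) (hC₀ : C₀.PosDef) {t : ℝ} (ht : 0 ≤ t) :
    (riccatiRiccatiPrecision B C₀ σ t).PosDef :=
  PosDef.posSemidef_add (hB.inv.posSemidef.smul (one_sub_exp_div_nonneg ht))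
    (hC₀.inv.smul (Real.exp_pos _))

theorem hasDerivAt_riccatiRiccatiPrecision (hσ : σ ≠ 0) (t : ℝ) :
    HasDerivAt (riccatiRiccatiPrecision B C₀ σ) ((2 : ℝ) • B⁻¹ - (2 * σ) • riccatiRiccatiPrecision B C₀ σ t) t := by
  have hexp : HasDerivAt (fun s => Real.exp (-2 * σ * s)) (-2 * σ * Real.exp (-2 * σ * t)) t :=
    ((hasDerivAt_id t).const_mul (-2 * σ)).exp.congr_deriv (by simp [mul_comm])
  have hcoef := (hexp.const_sub 1).div_const σ
  refine ((hcoef.smul_const B⁻¹).add (hexp.smul_const C₀⁻¹)).congr_deriv ?_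
  rw [riccatiRiccatiPrecision, smul_add, smul_smul, smul_smul,
    show 2 * σ * ((1 - Real.exp (-2 * σ * t)) / σ) = 2 - -(-2 * σ * Real.exp (-2 * σ * t)) / σ by
      field_simp]
  module

end RiccatiPrecision

theorem stmt12 {d : ℕ} (B C0 : Matrix (Fin d) (Fin d) ℝ)
    (hB : B.PosDef) (hC0 : C0.PosDef) (σ : ℝ) (hσ : 0 < σ)
    (C : ℝ → Matrix (Fin d) (Fin d) ℝ)
    (hC : C = fun t => (((1 - Real.exp (-2 * σ * t)) / σ) • B⁻¹ +
      Real.exp (-2 * σ * t) • C0⁻¹)⁻¹) :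
    C 0 = C0 ∧ (∀ t, 0 ≤ t → (C t).PosDef) ∧
    ∀ t, 0 ≤ t → ∀ i j, HasDerivAt (fun s => C s i j)
      (((-2 : ℝ) • (C t * B⁻¹ * C t) + (2 * σ) • C t) i j) t := by
  change C = fun t => (riccatiRiccatiPrecision B C0 σ t)⁻¹ at hC
  subst hC
  refine ⟨?_, fun t ht => (posDef_riccatiRiccatiPrecision σ hB hC0 ht).inv, fun t ht i j => ?_⟩
  · simpa using nonsing_inv_nonsing_inv _ ((isUnit_iff_isUnit_det _).1 hC0.isUnit)
  · have hC' := (hasDerivAt_riccatiRiccatiPrecision σ hσ.ne' t).matrix_inv_of_sub_smul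
      (posDef_riccatiRiccatiPrecision σ hB hC0 ht).isUnit
    rw [Matrix.mul_smul, Matrix.smul_mul, ← neg_smul] at hC'
    exact hasDerivAt_pi.1 (hasDerivAt_pi.1 hC' i) j
end

section
/- Let C : [0,∞) → ℝ^{d×d} take values in symmetric matrices, B symmetric positive definite, and let U(s,t) solve ∂_t U(s,t) = −C(t) B^{−1} U(s,t), U(s,s) = I. If C solves C' = −2CB^{−1}C + 2σC with C(s) invertible, then U(s,t)ᵀ C(t)^{−1} U(s,t) = e^{−2σ(t−s)} C(s)^{−1} for all t ≥ s. -/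
/-!
Since `C` solves the Riccati equation, its inverse solves the linear equation
`(C⁻¹)' = -C⁻¹ C' C⁻¹ = 2 B⁻¹ - 2σ C⁻¹`. Differentiating `M = Uᵀ C⁻¹ U`, the two terms coming
from `U' = -C B⁻¹ U` each contribute `-Uᵀ B⁻¹ U` (here the symmetry of `C` and `B⁻¹` is used),
which cancels the `2 Uᵀ B⁻¹ U` from `(C⁻¹)'`. Hence `M' = -2σ M` as long as `C` stays invertible,
and `M(t) = e^{-2σ(t-s)} M(s)` with `M(s) = C(s)⁻¹`.
-/

open MeasureTheory Matrix

/- `HasDerivAt` only sees the topology of `Matrix`, so the calculus of normed algebras can be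
borrowed by switching on one of the (non-instance) matrix norms locally. -/
theorem Matrix.hasDerivAt_iff_forall_entry {m n : Type*} [Fintype m] [Fintype n]
    {f : ℝ → Matrix m n ℝ} {f' : Matrix m n ℝ} {x : ℝ} :
    HasDerivAt f f' x ↔ ∀ i j, HasDerivAt (fun r => f r i j) (f' i j) x :=
  letI := Matrix.normedAddCommGroup (m := m) (n := n) (α := ℝ)
  letI := Matrix.normedSpace (m := m) (n := n) (α := ℝ) (R := ℝ)
  hasDerivAt_pi.trans (forall_congr' fun _ => hasDerivAt_pi)

theorem HasDerivAt.matrix_transpose {m n : Type*} [Fintype m] [Fintype n]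
    {A : ℝ → Matrix m n ℝ} {A' : Matrix m n ℝ} {t : ℝ} (hA : HasDerivAt A A' t) :
    HasDerivAt (fun r => (A r)ᵀ) A'ᵀ t :=
  hasDerivAt_iff_forall_entry.2 fun i j => hasDerivAt_iff_forall_entry.1 hA j i

section MatrixCalculus

variable {n : Type*} [Fintype n] [DecidableEq n] {A B : ℝ → Matrix n n ℝ}
  {A' B' : Matrix n n ℝ} {t : ℝ}

open scoped Matrix.Norms.Operator in
theorem HasDerivAt.matrix_mul (hA : HasDerivAt A A' t) (hB : HasDerivAt B B' t) :
    HasDerivAt (fun r => A r * B r) (A' * B t + A t * B') t :=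
  hA.mul hB

open scoped Matrix.Norms.Operator in
theorem HasDerivAt.matrix_inv_s15 (hA : HasDerivAt A A' t) (hunit : IsUnit (A t)) :
    HasDerivAt (fun r => (A r)⁻¹) (-((A t)⁻¹ * A' * (A t)⁻¹)) t := by
  obtain ⟨u, hu⟩ := hunit
  have hinv : HasFDerivAt Ring.inverse
      (-ContinuousLinearMap.mulLeftRight ℝ _ (A t)⁻¹ (A t)⁻¹) (A t) := by
    rw [← hu, nonsing_inv_eq_ringInverse, Ring.inverse_unit]
    exact hasFDerivAt_ringInverse u
  have hcomp := hinv.comp_hasDerivAt t hA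
  simp_rw [nonsing_inv_eq_ringInverse] at hcomp ⊢
  simp only [_root_.neg_apply, ContinuousLinearMap.mulLeftRight_apply] at hcomp
  exact hcomp

end MatrixCalculus

theorem eq_exp_mul_smul_of_hasDerivAt {E : Type*} [NormedAddCommGroup E] [NormedSpace ℝ E]
    {f : ℝ → E} {c s t : ℝ} (hf : ∀ r, s ≤ r → HasDerivAt f (c • f r) r) (hst : s ≤ t) :
    f t = Real.exp (c * (t - s)) • f s := by
  set g : ℝ → E := fun r => Real.exp (-c * (r - s)) • f r
  have hg : ∀ r, s ≤ r → HasDerivAt g 0 r := by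
    intro r hr
    have hexp : HasDerivAt (fun r => Real.exp (-c * (r - s))) (Real.exp (-c * (r - s)) * -c) r :=
      by simpa using (((hasDerivAt_id r).sub_const s).const_mul (-c)).exp
    refine (hexp.smul (hf r hr)).congr_deriv ?_
    module
  have hconst := constant_of_has_deriv_right_zero (f := g) (a := s) (b := t)
    (fun r hr => (hg r hr.1).continuousAt.continuousWithinAt)
    (fun r hr => (hg r hr.1).hasDerivWithinAt) t ⟨hst, le_rfl⟩
  simp only [g, sub_self, mul_zero, Real.exp_zero, one_smul] at hconst
  rw [← hconst, smul_smul, ← Real.exp_add, show c * (t - s) + -c * (t - s) = 0 by ring,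
    Real.exp_zero, one_smul]

theorem hasDerivAt_transpose_mul_inv_mul {n : Type*} [Fintype n] [DecidableEq n]
    {C U : ℝ → Matrix n n ℝ} {K : Matrix n n ℝ} {σ t : ℝ} (hK : K.IsSymm)
    (hCt : (C t).IsSymm) (hCu : IsUnit (C t))
    (hC : HasDerivAt C ((-2 : ℝ) • (C t * K * C t) + (2 * σ) • C t) t)
    (hU : HasDerivAt U (-(C t * K * U t)) t) :
    HasDerivAt (fun r => (U r)ᵀ * (C r)⁻¹ * U r) ((-2 * σ) • ((U t)ᵀ * (C t)⁻¹ * U t)) t := by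
  have hdet : IsUnit (C t).det := (isUnit_iff_isUnit_det _).mp hCu
  convert (hU.matrix_transpose.matrix_mul (hC.matrix_inv_s15 hCu)).matrix_mul hU using 1
  simp only [transpose_neg, transpose_mul, hK.eq, hCt.eq, Matrix.mul_add, Matrix.add_mul,
    Matrix.mul_neg, Matrix.neg_mul, Matrix.mul_smul, Matrix.smul_mul, Matrix.mul_assoc,
    nonsing_inv_mul_cancel_left _ _ hdet, mul_nonsing_inv _ hdet, Matrix.one_mul]
  module

theorem stmt15_general {d : ℕ} (B : Matrix (Fin d) (Fin d) ℝ) (hB : B.PosDef)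
    (σ : ℝ) (s : ℝ)
    (C U : ℝ → Matrix (Fin d) (Fin d) ℝ)
    (hCsym : ∀ t, (C t).IsSymm)
    (hCode : ∀ t, ∀ i j, HasDerivAt (fun r => C r i j)
      (((-2 : ℝ) • (C t * B⁻¹ * C t) + (2 * σ) • C t) i j) t)
    (hCpos : ∀ t, s ≤ t → (C t).PosDef)
    (hUs : U s = 1)
    (hUode : ∀ t, ∀ i j, HasDerivAt (fun r => U r i j) ((-(C t * B⁻¹ * U t)) i j) t) :
    ∀ t, s ≤ t → (U t)ᵀ * (C t)⁻¹ * U t = Real.exp (-2 * σ * (t - s)) • (C s)⁻¹ := by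
  intro t ht
  have hBinv : B⁻¹.IsSymm := isHermitian_iff_isSymm.mp hB.isHermitian.inv
  have hM : ∀ r, s ≤ r → HasDerivAt (fun x => (U x)ᵀ * (C x)⁻¹ * U x)
      ((-2 * σ) • ((U r)ᵀ * (C r)⁻¹ * U r)) r := fun r hr =>
    hasDerivAt_transpose_mul_inv_mul hBinv (hCsym r) (hCpos r hr).isUnit
      (hasDerivAt_iff_forall_entry.2 (hCode r)) (hasDerivAt_iff_forall_entry.2 (hUode r))
  open scoped Matrix.Norms.Operator in
  simpa [hUs] using eq_exp_mul_smul_of_hasDerivAt hM ht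

theorem stmt15 {d : ℕ} (B : Matrix (Fin d) (Fin d) ℝ) (hB : B.PosDef)
    (σ : ℝ) (hσ : 0 ≤ σ) (s : ℝ)
    (C U : ℝ → Matrix (Fin d) (Fin d) ℝ)
    (hCsym : ∀ t, (C t).IsSymm)
    (hCode : ∀ t, ∀ i j, HasDerivAt (fun r => C r i j)
      (((-2 : ℝ) • (C t * B⁻¹ * C t) + (2 * σ) • C t) i j) t)
    (hCpos : ∀ t, s ≤ t → (C t).PosDef)
    (hUs : U s = 1)
    (hUode : ∀ t, ∀ i j, HasDerivAt (fun r => U r i j) ((-(C t * B⁻¹ * U t)) i j) t) :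
    ∀ t, s ≤ t → (U t)ᵀ * (C t)⁻¹ * U t = Real.exp (-2 * σ * (t - s)) • (C s)⁻¹ :=
  stmt15_general B hB σ s C U hCsym hCode hCpos hUs hUode
end

section
/- Let B be symmetric positive definite, σ ≥ 0, u0 ∈ ℝ^d, and let C(t) solve C' = −2CB^{−1}C + 2σC with C(0) positive definite. If μ(t) solves μ' = −C(t)B^{−1}(μ − u0) and Σ(t) solves Σ' = −C B^{−1} Σ − Σ B^{−1} C + 2σC with Σ(0) = 0, then Σ(t) = (1 − e^{−2σt}) C(t) for all t ≥ 0. -/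
/-!
The difference `D = Σ - (1 - e^{-2σt}) C` vanishes at `t = 0`, and substituting the two
Riccati-type equations shows that the inhomogeneous terms `2σC` cancel, leaving the homogeneous
linear equation `D' = -(C B⁻¹ D + D B⁻¹ C)`. Its coefficient is continuous in `t`, so it is bounded
on `[0, T]`, and Grönwall's inequality forces `D ≡ 0`.
-/

open Set Matrix
open scoped Matrix.Norms.Elementwise

theorem eq_zero_of_hasDerivAt_clm_apply_self {E : Type*} [NormedAddCommGroup E] [NormedSpace ℝ E]
    {A : ℝ → E →L[ℝ] E} {X : ℝ → E} {a b : ℝ} (hA : ContinuousOn A (Icc a b))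
    (hX : ∀ t ∈ Icc a b, HasDerivAt X (A t (X t)) t) (ha : X a = 0) :
    ∀ t ∈ Icc a b, X t = 0 := by
  obtain ⟨K, hK⟩ := isCompact_Icc.exists_bound_of_continuousOn hA
  refine eq_zero_of_abs_deriv_le_mul_abs_self_of_eq_zero_right (K := K)
    (fun t ht => (hX t ht).continuousAt.continuousWithinAt)
    (fun t ht => (hX t (Ico_subset_Icc_self ht)).hasDerivWithinAt) ha fun t ht => ?_
  exact (A t).le_of_opNorm_le (hK t (Ico_subset_Icc_self ht)) (X t)

theorem Matrix.hasDerivAt_iff {𝕜 E m n : Type*} [NontriviallyNormedField 𝕜]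
    [NormedAddCommGroup E] [NormedSpace 𝕜 E] [Fintype m] [Fintype n]
    {F : 𝕜 → Matrix m n E} {F' : Matrix m n E} {t : 𝕜} :
    HasDerivAt F F' t ↔ ∀ i j, HasDerivAt (fun r => F r i j) (F' i j) t :=
  hasDerivAt_pi.trans (forall_congr' fun _ => hasDerivAt_pi)

section Lyapunov

variable {𝕜 n : Type*} [NontriviallyNormedField 𝕜] [CompleteSpace 𝕜] [Fintype n]

noncomputable def lyapunovCLM (M : Matrix n n 𝕜) :
    Matrix n n 𝕜 →ₗ[𝕜] Matrix n n 𝕜 →L[𝕜] Matrix n n 𝕜 where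
  toFun C := LinearMap.toContinuousLinearMap
    { toFun := fun D => C * M * D + D * M * C
      map_add' := fun D D' => by simp only [Matrix.mul_add, Matrix.add_mul]; abel
      map_smul' := fun c D => by
        simp only [Matrix.mul_smul, Matrix.smul_mul, smul_add, RingHom.id_apply] }
  map_add' C C' := by ext1 D; simp [Matrix.mul_add, Matrix.add_mul]; abel
  map_smul' c C := by ext1 D; simp [smul_add]

@[simp]
theorem lyapunovCLM_apply (M C D : Matrix n n 𝕜) :
    lyapunovCLM M C D = C * M * D + D * M * C := rfl

theorem continuous_lyapunovCLM (M : Matrix n n 𝕜) :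
    Continuous (lyapunovCLM M) :=
  (lyapunovCLM M).continuous_of_finiteDimensional

end Lyapunov

theorem stmt18_general {d : ℕ} (B : Matrix (Fin d) (Fin d) ℝ)
    (σ : ℝ)
    (C Sg : ℝ → Matrix (Fin d) (Fin d) ℝ)
    (hCode : ∀ t, ∀ i j, HasDerivAt (fun r => C r i j)
      (((-2 : ℝ) • (C t * B⁻¹ * C t) + (2 * σ) • C t) i j) t)
    (hSg0 : Sg 0 = 0)
    (hSgode : ∀ t, ∀ i j, HasDerivAt (fun r => Sg r i j)
      ((-(C t * B⁻¹ * Sg t) - Sg t * B⁻¹ * C t + (2 * σ) • C t) i j) t) :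
    ∀ t, 0 ≤ t → Sg t = (1 - Real.exp (-2 * σ * t)) • C t := by
  intro T hT
  have hC (t : ℝ) := Matrix.hasDerivAt_iff.2 (hCode t)
  have hSg (t : ℝ) := Matrix.hasDerivAt_iff.2 (hSgode t)
  set c : ℝ → ℝ := fun t => 1 - Real.exp (-2 * σ * t)
  have hc (t : ℝ) : HasDerivAt c (2 * σ * (1 - c t)) t := by
    refine ((((hasDerivAt_id t).const_mul (-2 * σ)).exp).const_sub 1).congr_deriv ?_
    simp only [c, id]
    ring
  set D : ℝ → Matrix (Fin d) (Fin d) ℝ := fun t => Sg t - c t • C t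
  have hD (t : ℝ) : HasDerivAt D ((-lyapunovCLM B⁻¹ (C t)) (D t)) t := by
    refine ((hSg t).sub ((hc t).smul (hC t))).congr_deriv ?_
    simp only [D, _root_.neg_apply, lyapunovCLM_apply, Matrix.mul_sub, Matrix.sub_mul,
      Matrix.mul_smul, Matrix.smul_mul, smul_add]
    module
  have hA : Continuous fun t => -lyapunovCLM B⁻¹ (C t) :=
    ((continuous_lyapunovCLM B⁻¹).comp
      (continuous_iff_continuousAt.2 fun t => (hC t).continuousAt)).neg
  have hD0 : D 0 = 0 := by simp [D, c, hSg0]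
  exact sub_eq_zero.1
    (eq_zero_of_hasDerivAt_clm_apply_self hA.continuousOn (fun t _ => hD t) hD0 T ⟨hT, le_rfl⟩)

theorem stmt18 {d : ℕ} (B : Matrix (Fin d) (Fin d) ℝ) (hB : B.PosDef)
    (σ : ℝ) (hσ : 0 ≤ σ) (u0 : Fin d → ℝ)
    (C Sg : ℝ → Matrix (Fin d) (Fin d) ℝ) (μ : ℝ → Fin d → ℝ)
    (hC0 : (C 0).PosDef)
    (hCode : ∀ t, ∀ i j, HasDerivAt (fun r => C r i j)
      (((-2 : ℝ) • (C t * B⁻¹ * C t) + (2 * σ) • C t) i j) t)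
    (hμ : ∀ t, ∀ i, HasDerivAt (fun r => μ r i) ((-(C t *ᵥ (B⁻¹ *ᵥ (μ t - u0)))) i) t)
    (hSg0 : Sg 0 = 0)
    (hSgode : ∀ t, ∀ i j, HasDerivAt (fun r => Sg r i j)
      ((-(C t * B⁻¹ * Sg t) - Sg t * B⁻¹ * C t + (2 * σ) • C t) i j) t) :
    ∀ t, 0 ≤ t → Sg t = (1 - Real.exp (-2 * σ * t)) • C t :=
  stmt18_general B σ C Sg hCode hSg0 hSgode
end

section
/- Let C1(t), C2(t) be two solutions of the matrix Riccati ODE C' = −2CB^{−1}C + 2σC with positive definite initial data, B symmetric positive definite, σ ≥ 0. Then C1(t)^{−1} − C2(t)^{−1} = e^{−2σt}(C1(0)^{−1} − C2(0)^{−1}), and hence ‖C1(t) − C2(t)‖_F ≤ ‖C1(t)‖₂ ‖C2(t)‖₂ ‖C1(0)^{−1} − C2(0)^{−1}‖_F e^{−2σt}. -/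
open MeasureTheory Matrix

noncomputable def frob {d : ℕ} (M : Matrix (Fin d) (Fin d) ℝ) : ℝ :=
  Real.sqrt (∑ i, ∑ j, M i j ^ 2)

noncomputable def opNorm {d : ℕ} (M : Matrix (Fin d) (Fin d) ℝ) : ℝ :=
  ‖Matrix.toEuclideanCLM (𝕜 := ℝ) M‖

/-
If `C` solves the Riccati equation, `C⁻¹` formally solves the linear equation
`D' = 2B⁻¹ - 2σD`, whose solution `D` is explicit by variation of constants. Conversely, for this
`D` the defect `G = CD - 1` solves the linear equation `G' = -2CB⁻¹G` with `G 0 = 0`, so `G`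
vanishes by Grönwall's inequality and `(C t)⁻¹ = D t`. Two such `D` differ by the homogeneous
solution `e^{-2σt}(C₁(0)⁻¹ - C₂(0)⁻¹)`, and the norm bound follows from
`C₁ - C₂ = C₁ (C₂⁻¹ - C₁⁻¹) C₂` and `‖AMB‖_F ≤ ‖A‖₂ ‖M‖_F ‖B‖₂`.
-/

theorem sub_eq_mul_sub_mul_of_mul_eq_one {R : Type*} [Ring R] {a a' b b' : R}
    (ha : a * a' = 1) (hb : b' * b = 1) : a - b = a * (b' - a') * b := by
  rw [mul_sub, sub_mul, mul_assoc, hb, mul_one, ha, one_mul]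

theorem eq_zero_of_hasDerivAt_eq_mul_left {𝔸 : Type*} [NormedRing 𝔸] [NormedSpace ℝ 𝔸]
    {A G : ℝ → 𝔸} (hA : Continuous A) (hG : ∀ t, HasDerivAt G (A t * G t) t) {a t : ℝ}
    (ha : G a = 0) (ht : a ≤ t) : G t = 0 := by
  obtain ⟨K, hK⟩ :=
    isCompact_Icc.exists_bound_of_continuousOn (hA.continuousOn (s := Set.Icc a t))
  refine eq_zero_of_abs_deriv_le_mul_abs_self_of_eq_zero_right (K := K)
    (fun s _ => (hG s).continuousAt.continuousWithinAt) (fun s _ => (hG s).hasDerivWithinAt) ha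
    (fun s hs => ?_) t ⟨ht, le_rfl⟩
  calc ‖A s * G s‖ ≤ ‖A s‖ * ‖G s‖ := norm_mul_le _ _
    _ ≤ K * ‖G s‖ := by gcongr; exact hK s (Set.Ico_subset_Icc_self hs)

open scoped Matrix.Norms.Elementwise in
theorem Matrix.hasDerivAt_iff_forall_apply {m n : Type*} [Fintype m] [Fintype n]
    {f : ℝ → Matrix m n ℝ} {f' : Matrix m n ℝ} {t : ℝ} :
    HasDerivAt f f' t ↔ ∀ i j, HasDerivAt (fun r => f r i j) (f' i j) t :=
  hasDerivAt_pi.trans (forall_congr' fun _ => hasDerivAt_pi)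

theorem opNorm_transpose {d : ℕ} (A : Matrix (Fin d) (Fin d) ℝ) : opNorm Aᵀ = opNorm A := by
  rw [opNorm, opNorm, ← conjTranspose_eq_transpose_of_trivial, ← star_eq_conjTranspose, map_star,
    ContinuousLinearMap.star_eq_adjoint, LinearIsometryEquiv.norm_map]

section Frobenius

open scoped Matrix.Norms.Frobenius

theorem frob_eq_norm {d : ℕ} (M : Matrix (Fin d) (Fin d) ℝ) : frob M = ‖M‖ := by
  change _ = ‖WithLp.toLp 2 fun i => WithLp.toLp 2 (M i)‖
  simp only [PiLp.norm_eq_of_L2, Real.norm_eq_abs, sq_abs]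
  rw [frob]
  congr 1
  refine Finset.sum_congr rfl fun i _ => ?_
  rw [Real.sq_sqrt (by positivity)]

theorem Matrix.frobenius_norm_le_of_norm_row_le {m n : Type*} [Fintype m] [Fintype n]
    {M N : Matrix m n ℝ} {c : ℝ} (hc : 0 ≤ c)
    (h : ∀ i, ‖WithLp.toLp 2 (M i)‖ ≤ c * ‖WithLp.toLp 2 (N i)‖) : ‖M‖ ≤ c * ‖N‖ := by
  change ‖WithLp.toLp 2 fun i => WithLp.toLp 2 (M i)‖
    ≤ c * ‖WithLp.toLp 2 fun i => WithLp.toLp 2 (N i)‖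
  rw [← pow_le_pow_iff_left₀ (norm_nonneg _) (by positivity) two_ne_zero, mul_pow,
    PiLp.norm_sq_eq_of_L2, PiLp.norm_sq_eq_of_L2, Finset.mul_sum]
  gcongr with i
  rw [← mul_pow]
  exact pow_le_pow_left₀ (norm_nonneg _) (h i) 2

theorem norm_mul_le_norm_mul_opNorm {d : ℕ} (N A : Matrix (Fin d) (Fin d) ℝ) :
    ‖N * A‖ ≤ ‖N‖ * opNorm A := by
  rw [mul_comm, ← opNorm_transpose]
  refine frobenius_norm_le_of_norm_row_le (norm_nonneg _) fun i => ?_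
  rw [show (N * A) i = Aᵀ *ᵥ N i by rw [mulVec_transpose]; rfl, ← toEuclideanCLM_toLp]
  exact ContinuousLinearMap.le_opNorm _ _

theorem norm_mul_le_opNorm_mul_norm {d : ℕ} (A N : Matrix (Fin d) (Fin d) ℝ) :
    ‖A * N‖ ≤ opNorm A * ‖N‖ := by
  rw [← frobenius_norm_transpose, transpose_mul, ← frobenius_norm_transpose N, mul_comm,
    ← opNorm_transpose A]
  exact norm_mul_le_norm_mul_opNorm _ _

theorem frob_mul_mul_le {d : ℕ} (A M B : Matrix (Fin d) (Fin d) ℝ) :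
    frob (A * M * B) ≤ opNorm A * frob M * opNorm B := by
  rw [frob_eq_norm, frob_eq_norm]
  calc ‖A * M * B‖ ≤ ‖A * M‖ * opNorm B := norm_mul_le_norm_mul_opNorm _ _
    _ ≤ opNorm A * ‖M‖ * opNorm B := by
      gcongr
      exacts [norm_nonneg _, norm_mul_le_opNorm_mul_norm _ _]

theorem frob_smul {d : ℕ} (c : ℝ) (M : Matrix (Fin d) (Fin d) ℝ) :
    frob (c • M) = |c| * frob M := by
  rw [frob_eq_norm, frob_eq_norm, norm_smul, Real.norm_eq_abs]

theorem frob_sub_comm {d : ℕ} (M N : Matrix (Fin d) (Fin d) ℝ) : frob (M - N) = frob (N - M) := by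
  rw [frob_eq_norm, frob_eq_norm, norm_sub_rev]

end Frobenius

section Riccati

variable {n : Type*} [Fintype n] [DecidableEq n]

/-- Variation of constants for `D' = 2B⁻¹ - 2σD`, `D 0 = C₀⁻¹`. -/
noncomputable def riccatiInverse (B C₀ : Matrix n n ℝ) (σ t : ℝ) : Matrix n n ℝ :=
  Real.exp (-2 * σ * t) • (C₀⁻¹ + (2 * ∫ s in (0 : ℝ)..t, Real.exp (2 * σ * s)) • B⁻¹)

theorem riccatiInverse_zero (B C₀ : Matrix n n ℝ) (σ : ℝ) : riccatiInverse B C₀ σ 0 = C₀⁻¹ := by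
  simp [riccatiInverse]

theorem riccatiInverse_sub (B C₁ C₂ : Matrix n n ℝ) (σ t : ℝ) :
    riccatiInverse B C₁ σ t - riccatiInverse B C₂ σ t =
      Real.exp (-2 * σ * t) • (C₁⁻¹ - C₂⁻¹) := by
  rw [riccatiInverse, riccatiInverse, ← smul_sub, add_sub_add_right_eq_sub]

open scoped Matrix.Norms.Frobenius

theorem hasDerivAt_riccatiInverse (B C₀ : Matrix n n ℝ) (σ t : ℝ) :
    HasDerivAt (riccatiInverse B C₀ σ) ((2 : ℝ) • B⁻¹ - (2 * σ) • riccatiInverse B C₀ σ t) t := by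
  have he : HasDerivAt (fun r => Real.exp (-2 * σ * r)) (-(2 * σ) * Real.exp (-2 * σ * t)) t := by
    simpa [mul_comm] using ((hasDerivAt_id t).const_mul (-2 * σ)).exp
  have hI : HasDerivAt (fun u => ∫ s in (0 : ℝ)..u, Real.exp (2 * σ * s))
      (Real.exp (2 * σ * t)) t :=
    (Continuous.integral_hasStrictDerivAt (by fun_prop) 0 t).hasDerivAt
  refine (he.smul ((hI.const_mul 2).smul_const B⁻¹ |>.const_add C₀⁻¹)).congr_deriv ?_
  have hexp : Real.exp (-2 * σ * t) * Real.exp (2 * σ * t) = 1 := by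
    rw [← Real.exp_add]; simp
  rw [riccatiInverse]
  match_scalars
  · linear_combination 2 * hexp
  · ring

theorem riccati_linear_product_rule (B C D : Matrix n n ℝ) (σ : ℝ) :
    ((-2 : ℝ) • (C * B⁻¹ * C) + (2 * σ) • C) * D + C * ((2 : ℝ) • B⁻¹ - (2 * σ) • D)
      = ((-2 : ℝ) • (C * B⁻¹)) * (C * D - 1) := by
  simp only [add_mul, mul_sub, smul_mul_assoc, mul_smul_comm, mul_assoc, mul_one]
  module

theorem mul_riccatiInverse_eq_one {B : Matrix n n ℝ} {σ : ℝ} {C : ℝ → Matrix n n ℝ}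
    (hC₀ : IsUnit (C 0).det)
    (hC : ∀ t, ∀ i j, HasDerivAt (fun r => C r i j)
      (((-2 : ℝ) • (C t * B⁻¹ * C t) + (2 * σ) • C t) i j) t)
    {t : ℝ} (ht : 0 ≤ t) : C t * riccatiInverse B (C 0) σ t = 1 := by
  have hC' : ∀ t, HasDerivAt C ((-2 : ℝ) • (C t * B⁻¹ * C t) + (2 * σ) • C t) t :=
    fun t => hasDerivAt_iff_forall_apply.2 (hC t)
  have hG : ∀ t, HasDerivAt (fun r => C r * riccatiInverse B (C 0) σ r - 1)
      (((-2 : ℝ) • (C t * B⁻¹)) * (C t * riccatiInverse B (C 0) σ t - 1)) t := fun t => by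
    rw [← riccati_linear_product_rule]
    exact ((hC' t).mul (hasDerivAt_riccatiInverse B (C 0) σ t)).sub_const 1
  have hA : Continuous fun t => (-2 : ℝ) • (C t * B⁻¹) := by
    have : Continuous C := continuous_iff_continuousAt.2 fun t => (hC' t).continuousAt
    fun_prop
  refine sub_eq_zero.1 (eq_zero_of_hasDerivAt_eq_mul_left hA hG ?_ ht)
  rw [riccatiInverse_zero, mul_nonsing_inv _ hC₀, sub_self]

end Riccati

theorem stmt19_general {d : ℕ} (B : Matrix (Fin d) (Fin d) ℝ)
    (σ : ℝ)
    (C1 C2 : ℝ → Matrix (Fin d) (Fin d) ℝ)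
    (hC10 : (C1 0).PosDef) (hC20 : (C2 0).PosDef)
    (hC1ode : ∀ t, ∀ i j, HasDerivAt (fun r => C1 r i j)
      (((-2 : ℝ) • (C1 t * B⁻¹ * C1 t) + (2 * σ) • C1 t) i j) t)
    (hC2ode : ∀ t, ∀ i j, HasDerivAt (fun r => C2 r i j)
      (((-2 : ℝ) • (C2 t * B⁻¹ * C2 t) + (2 * σ) • C2 t) i j) t) :
    ∀ t, 0 ≤ t →
      (C1 t)⁻¹ - (C2 t)⁻¹ = Real.exp (-2 * σ * t) • ((C1 0)⁻¹ - (C2 0)⁻¹) ∧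
      frob (C1 t - C2 t) ≤
        opNorm (C1 t) * opNorm (C2 t) * frob ((C1 0)⁻¹ - (C2 0)⁻¹) *
          Real.exp (-2 * σ * t) := by
  intro t ht
  have h1 := mul_riccatiInverse_eq_one (isUnit_iff_isUnit_det _ |>.1 hC10.isUnit) hC1ode ht
  have h2 := mul_riccatiInverse_eq_one (isUnit_iff_isUnit_det _ |>.1 hC20.isUnit) hC2ode ht
  refine ⟨by rw [inv_eq_right_inv h1, inv_eq_right_inv h2, riccatiInverse_sub], ?_⟩
  calc frob (C1 t - C2 t)
      = frob (C1 t * (riccatiInverse B (C2 0) σ t - riccatiInverse B (C1 0) σ t) * C2 t) := by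
        rw [← sub_eq_mul_sub_mul_of_mul_eq_one h1 (mul_eq_one_comm.1 h2)]
    _ ≤ opNorm (C1 t) * frob (Real.exp (-2 * σ * t) • ((C2 0)⁻¹ - (C1 0)⁻¹)) * opNorm (C2 t) := by
        rw [← riccatiInverse_sub]; exact frob_mul_mul_le _ _ _
    _ = opNorm (C1 t) * opNorm (C2 t) * frob ((C1 0)⁻¹ - (C2 0)⁻¹) * Real.exp (-2 * σ * t) := by
        rw [frob_smul, abs_of_pos (Real.exp_pos _), frob_sub_comm]; ring

theorem stmt19 {d : ℕ} (B : Matrix (Fin d) (Fin d) ℝ) (hB : B.PosDef)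
    (σ : ℝ) (hσ : 0 ≤ σ)
    (C1 C2 : ℝ → Matrix (Fin d) (Fin d) ℝ)
    (hC10 : (C1 0).PosDef) (hC20 : (C2 0).PosDef)
    (hC1ode : ∀ t, ∀ i j, HasDerivAt (fun r => C1 r i j)
      (((-2 : ℝ) • (C1 t * B⁻¹ * C1 t) + (2 * σ) • C1 t) i j) t)
    (hC2ode : ∀ t, ∀ i j, HasDerivAt (fun r => C2 r i j)
      (((-2 : ℝ) • (C2 t * B⁻¹ * C2 t) + (2 * σ) • C2 t) i j) t) :
    ∀ t, 0 ≤ t →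
      (C1 t)⁻¹ - (C2 t)⁻¹ = Real.exp (-2 * σ * t) • ((C1 0)⁻¹ - (C2 0)⁻¹) ∧
      frob (C1 t - C2 t) ≤
        opNorm (C1 t) * opNorm (C2 t) * frob ((C1 0)⁻¹ - (C2 0)⁻¹) *
          Real.exp (-2 * σ * t) :=
  stmt19_general B σ C1 C2 hC10 hC20 hC1ode hC2ode
end
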